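/- arXiv:1702.03724 — 6 statements merged into one kernel-verified Lean document; each statement's English description precedes it below -/
import Mathlib

section
/- Let Γ₁ be the complex extension of Γ₁* along block S₁ and Γ₂ the complex extension of Γ₂* along block S₂. Then unCD(Γ₁,Γ₂) = unCD(Γ₁*,Γ₂*) + |S₁ \ S₂| + |S₂ \ S₁|. -/
open Finset

/-- `i` and `j` lie in the same block of the partition `Γ`. -/
def samePart {n : ℕ} (Γ : Finpartition (univ : Finset (Fin n))) (i j : Fin n) : Prop :=
  ∃ S ∈ Γ.parts, i ∈ S ∧ j ∈ S

open scoped Classical in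
/-- Unnormalized Cluster Difference between two partitions of `{1,…,n}`. -/
noncomputable def unCD {n : ℕ} (Γ₁ Γ₂ : Finpartition (univ : Finset (Fin n))) : ℕ :=
  ((univ : Finset (Fin n × Fin n)).filter
    (fun p => p.1 < p.2 ∧ ¬ (samePart Γ₁ p.1 p.2 ↔ samePart Γ₂ p.1 p.2))).card

/-- `Γ` is the simple extension of `Γs`: blocks of `Γs` (reindexed) plus the singleton `{n+1}`. -/
def IsSimpleExt {n : ℕ} (Γs : Finpartition (univ : Finset (Fin n)))
    (Γ : Finpartition (univ : Finset (Fin (n + 1)))) : Prop :=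
  Γ.parts = insert {Fin.last n} (Γs.parts.image (fun S => S.image Fin.castSucc))

/-- `Γ` is the complex extension of `Γs` along its block `S`:
the element `n+1` is added to the block `S`. -/
def IsComplexExt {n : ℕ} (Γs : Finpartition (univ : Finset (Fin n))) (S : Finset (Fin n))
    (Γ : Finpartition (univ : Finset (Fin (n + 1)))) : Prop :=
  S ∈ Γs.parts ∧
    Γ.parts = insert (insert (Fin.last n) (S.image Fin.castSucc))
      ((Γs.parts.erase S).image (fun T => T.image Fin.castSucc))

/-- `Γ` is an extension of `Γs` (equivalently, `Γs` is the reduct of `Γ`). -/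
def IsExt {n : ℕ} (Γs : Finpartition (univ : Finset (Fin n)))
    (Γ : Finpartition (univ : Finset (Fin (n + 1)))) : Prop :=
  IsSimpleExt Γs Γ ∨ ∃ S, IsComplexExt Γs S Γ

noncomputable instance {n : ℕ} : Fintype (Finpartition (univ : Finset (Fin n))) :=
  Fintype.ofInjective Finpartition.parts (fun _ _ h => Finpartition.ext h)

noncomputable instance {n : ℕ} : DecidableEq (Finpartition (univ : Finset (Fin n))) :=
  Classical.decEq _

/-!
A pair `i < j` of `{1, …, n+1}` either has `j ≤ n`, and then both extensions relate it exactly as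
`Γ₁*` and `Γ₂*` do, or has `j = n+1`, and then `i` is joined to `n+1` in `Γₖ` iff `i ∈ Sₖ`; so the
pairs of the second kind that count are those with `i` in the symmetric difference of `S₁` and `S₂`.
-/
theorem Fin.card_filter_lt_and_castSucc_last {n : ℕ} (D : Fin (n + 1) → Fin (n + 1) → Prop)
    [DecidableRel D] :
    #{p : Fin (n + 1) × Fin (n + 1) | p.1 < p.2 ∧ D p.1 p.2} =
      #{p : Fin n × Fin n | p.1 < p.2 ∧ D p.1.castSucc p.2.castSucc} +
        #{i : Fin n | D i.castSucc (Fin.last n)} := by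
  simp only [card_filter, Fintype.sum_prod_type, Fin.sum_univ_castSucc, Finset.sum_add_distrib,
    Fin.castSucc_lt_castSucc_iff, Fin.castSucc_lt_last, true_and, lt_irrefl, false_and,
    if_false, add_zero, (Fin.le_last _).not_gt, sum_const_zero]

lemma Finset.card_filter_not_mem_iff_mem {α : Type*} [Fintype α] [DecidableEq α] (s t : Finset α) :
    #{a | ¬(a ∈ s ↔ a ∈ t)} = #(s \ t) + #(t \ s) := by
  rw [← card_union_of_disjoint disjoint_sdiff_sdiff]
  congr 1
  ext a
  simp only [mem_filter, mem_univ, true_and, mem_union, mem_sdiff]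
  tauto

namespace IsComplexExt

variable {n : ℕ} {Γs : Finpartition (univ : Finset (Fin n))} {S : Finset (Fin n)}
  {Γ : Finpartition (univ : Finset (Fin (n + 1)))}

lemma samePart_castSucc (h : IsComplexExt Γs S Γ) (i j : Fin n) :
    samePart Γ i.castSucc j.castSucc ↔ samePart Γs i j := by
  obtain ⟨hS, hparts⟩ := h
  rw [samePart, samePart, hparts, ← insert_erase hS]
  simp

lemma samePart_castSucc_last (h : IsComplexExt Γs S Γ) (i : Fin n) :
    samePart Γ i.castSucc (Fin.last n) ↔ i ∈ S := by
  simp [samePart, h.2]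

end IsComplexExt

theorem stmt6 {n : ℕ} {Γ₁s Γ₂s : Finpartition (univ : Finset (Fin n))} {S₁ S₂ : Finset (Fin n)}
    {Γ₁ Γ₂ : Finpartition (univ : Finset (Fin (n + 1)))}
    (h₁ : IsComplexExt Γ₁s S₁ Γ₁) (h₂ : IsComplexExt Γ₂s S₂ Γ₂) :
    unCD Γ₁ Γ₂ = unCD Γ₁s Γ₂s + (S₁ \ S₂).card + (S₂ \ S₁).card := by
  classical
  have key := Fin.card_filter_lt_and_castSucc_last fun i j => ¬(samePart Γ₁ i j ↔ samePart Γ₂ i j)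
  simp only [h₁.samePart_castSucc, h₂.samePart_castSucc, h₁.samePart_castSucc_last,
    h₂.samePart_castSucc_last, card_filter_not_mem_iff_mem, ← add_assoc] at key
  unfold unCD
  convert key
end

section
/- Let Γ* and Γ*' be partitions of {1,...,n}, with Γ*' having k blocks. The sum of unCD distances from the simple extension Γ₀ of Γ* to all k+1 extensions of Γ*' equals n + (k+1)·unCD(Γ*,Γ*'). -/
open Finset

/-!
Every extension restricts on `{1,…,n}` to the partition it extends, so the pairs
`i < j ≤ n` contribute `unCD Γ* Γ*'` to each of the `k + 1` distances. Since `n + 1` is a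
singleton in `Γ₀`, a pair `(i, n + 1)` contributes exactly when `i` shares a block with `n + 1`
in the other extension: never for the simple extension, and for `i ∈ S` in the extension along
`S`. The blocks `S` of `Γ*'` partition `{1,…,n}`, so these contributions add up to `n`.
-/

open scoped Classical in
theorem unCD_eq_add_card {n : ℕ} {Γ Γ' : Finpartition (univ : Finset (Fin (n + 1)))}
    {Γs Γs' : Finpartition (univ : Finset (Fin n))}
    (h : ∀ i j : Fin n, samePart Γ i.castSucc j.castSucc ↔ samePart Γs i j)
    (h' : ∀ i j : Fin n, samePart Γ' i.castSucc j.castSucc ↔ samePart Γs' i j) :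
    unCD Γ Γ' = unCD Γs Γs' + #{i : Fin n |
      ¬ (samePart Γ i.castSucc (Fin.last n) ↔ samePart Γ' i.castSucc (Fin.last n))} := by
  simp only [unCD, card_filter, Fintype.sum_prod_type, Fin.sum_univ_castSucc, h, h',
    Fin.castSucc_lt_castSucc_iff, Fin.castSucc_lt_last, not_lt.2 (Fin.le_last _), true_and,
    false_and, if_false, sum_const_zero, add_zero, sum_add_distrib]

section
variable {n : ℕ} {Γs : Finpartition (univ : Finset (Fin n))}
  {Γ : Finpartition (univ : Finset (Fin (n + 1)))}

theorem IsSimpleExt.samePart_castSucc_iff (h : IsSimpleExt Γs Γ) (i j : Fin n) :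
    samePart Γ i.castSucc j.castSucc ↔ samePart Γs i j := by
  simp [samePart, show Γ.parts = _ from h]

theorem IsSimpleExt.not_samePart_last (h : IsSimpleExt Γs Γ) (i : Fin n) :
    ¬ samePart Γ i.castSucc (Fin.last n) := by
  simp [samePart, show Γ.parts = _ from h]

theorem IsComplexExt.samePart_castSucc_iff {S : Finset (Fin n)} (h : IsComplexExt Γs S Γ)
    (i j : Fin n) : samePart Γ i.castSucc j.castSucc ↔ samePart Γs i j := by
  obtain ⟨hS, hΓ⟩ := h
  rw [samePart, samePart, hΓ, ← insert_erase hS]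
  simp

theorem IsComplexExt.samePart_last_iff {S : Finset (Fin n)} (h : IsComplexExt Γs S Γ)
    (i : Fin n) : samePart Γ i.castSucc (Fin.last n) ↔ i ∈ S := by
  simp [samePart, h.2]

open scoped Classical in
theorem IsSimpleExt.unCD_eq {Γs' : Finpartition (univ : Finset (Fin n))}
    {Γ' : Finpartition (univ : Finset (Fin (n + 1)))} (h : IsSimpleExt Γs Γ)
    (h' : ∀ i j : Fin n, samePart Γ' i.castSucc j.castSucc ↔ samePart Γs' i j) :
    unCD Γ Γ' = unCD Γs Γs' + #{i : Fin n | samePart Γ' i.castSucc (Fin.last n)} := by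
  simp only [unCD_eq_add_card h.samePart_castSucc_iff h', h.not_samePart_last, false_iff,
    not_not]

end

theorem stmt10 {n : ℕ} {Γs Γs' : Finpartition (univ : Finset (Fin n))}
    {Γ₀ Γ₀' : Finpartition (univ : Finset (Fin (n + 1)))}
    (h₀ : IsSimpleExt Γs Γ₀) (h₀' : IsSimpleExt Γs' Γ₀')
    (E' : Finset (Fin n) → Finpartition (univ : Finset (Fin (n + 1))))
    (hE' : ∀ S ∈ Γs'.parts, IsComplexExt Γs' S (E' S)) :
    unCD Γ₀ Γ₀' + ∑ S ∈ Γs'.parts, unCD Γ₀ (E' S)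
      = n + (Γs'.parts.card + 1) * unCD Γs Γs' := by
  have simple : unCD Γ₀ Γ₀' = unCD Γs Γs' := by
    simp [h₀.unCD_eq h₀'.samePart_castSucc_iff, h₀'.not_samePart_last]
  have complex (S) (hS : S ∈ Γs'.parts) : unCD Γ₀ (E' S) = unCD Γs Γs' + #S := by
    simp [h₀.unCD_eq (hE' S hS).samePart_castSucc_iff, (hE' S hS).samePart_last_iff]
  rw [simple, sum_congr rfl complex, sum_add_distrib, sum_const, Γs'.sum_card_parts, card_univ,
    Fintype.card_fin, smul_eq_mul]
  ring
end

section
/- Let Γ* and Γ*' be partitions of {1,...,n}, with Γ*' having k blocks. For a complex extension Γ_m of Γ* obtained by adding n+1 to block S_m ∈ Γ*, the sum of unCD distances from Γ_m to all k+1 extensions of Γ*' equals (k+1)·unCD(Γ*,Γ*') + (k−1)·|S_m| + n. -/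
open Finset

/-
Pairs `i < j ≤ n` are discordant for two extensions exactly when they are discordant for the
partitions they extend, and a pair `(i, n+1)` is discordant exactly when `i` lies in just one of
the two blocks that `n+1` joins (the block is empty for the simple extension). Hence
`unCD(Γm, Γ') = unCD(Γ*, Γ*') + |Sm \ S'| + |S' \ Sm|`, with `S' = ∅` or `S'` a block of `Γ*'`.
Summing over the `k + 1` extensions of `Γ*'`, the blocks `S'_l` partition `{1,…,n}`, so
`Σ_l |Sm \ S'_l| = (k - 1)|Sm|` and `Σ_l |S'_l \ Sm| = n - |Sm|`.
-/

namespace Finpartition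

variable {α : Type*} [DecidableEq α] {s A : Finset α} (P : Finpartition s)

theorem sum_card_parts_inter (hA : A ⊆ s) : ∑ S ∈ P.parts, #(S ∩ A) = #A := by
  rw [← (P.restrict hA).sum_card_parts, P.sum_restrict hA card card_empty]
  rfl

theorem sum_card_sdiff_parts (hA : A ⊆ s) : ∑ S ∈ P.parts, #(A \ S) = (#P.parts - 1) * #A := by
  rw [Nat.sub_one_mul]
  refine Nat.eq_sub_of_add_eq ?_
  conv_lhs => rw [← P.sum_card_parts_inter hA, ← sum_add_distrib]
  simp_rw [inter_comm _ A, card_sdiff_add_card_inter, sum_const, smul_eq_mul]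

theorem sum_card_parts_sdiff (hA : A ⊆ s) : ∑ S ∈ P.parts, #(S \ A) = #s - #A := by
  refine Nat.eq_sub_of_add_eq ?_
  rw [← P.sum_card_parts_inter hA, ← sum_add_distrib, ← P.sum_card_parts]
  simp_rw [card_sdiff_add_card_inter]

end Finpartition

section Extension

variable {n : ℕ}

def IsExtAlong (Γs : Finpartition (univ : Finset (Fin n))) (P : Finset (Fin n))
    (Γ : Finpartition (univ : Finset (Fin (n + 1)))) : Prop :=
  (∀ i j, samePart Γ i.castSucc j.castSucc ↔ samePart Γs i j) ∧
    ∀ i, samePart Γ i.castSucc (Fin.last n) ↔ i ∈ P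

variable {Γs Γs' : Finpartition (univ : Finset (Fin n))} {P P' : Finset (Fin n)}
  {Γ Γ' : Finpartition (univ : Finset (Fin (n + 1)))}

theorem isExtAlong_of_parts_eq {Q : Finset (Finset (Fin n))}
    (h : Γ.parts = insert (insert (Fin.last n) (P.image Fin.castSucc))
      (Q.image (fun T => T.image Fin.castSucc)))
    (hΓs : ∀ i j, samePart Γs i j ↔ ∃ T ∈ insert P Q, i ∈ T ∧ j ∈ T) :
    IsExtAlong Γs P Γ :=
  ⟨fun i j => by rw [hΓs]; simp [samePart, h, Fin.castSucc_ne_last],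
    fun i => by simp [samePart, h, Fin.castSucc_ne_last]⟩

theorem IsComplexExt.isExtAlong (h : IsComplexExt Γs P Γ) : IsExtAlong Γs P Γ :=
  isExtAlong_of_parts_eq h.2 (by simp [samePart, insert_erase h.1])

theorem IsSimpleExt.isExtAlong (h : IsSimpleExt Γs Γ) : IsExtAlong Γs ∅ Γ :=
  isExtAlong_of_parts_eq (Q := Γs.parts) (by rw [IsSimpleExt] at h; simpa using h)
    (by simp [samePart])

open scoped Classical in
noncomputable def discordantPairs (Γ₁ Γ₂ : Finpartition (univ : Finset (Fin n))) :
    Finset (Fin n × Fin n) :=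
  univ.filter fun p => p.1 < p.2 ∧ ¬(samePart Γ₁ p.1 p.2 ↔ samePart Γ₂ p.1 p.2)

theorem unCD_eq_card_discordantPairs (Γ₁ Γ₂ : Finpartition (univ : Finset (Fin n))) :
    unCD Γ₁ Γ₂ = #(discordantPairs Γ₁ Γ₂) :=
  rfl

theorem discordantPairs_eq_of_isExtAlong (h : IsExtAlong Γs P Γ) (h' : IsExtAlong Γs' P' Γ') :
    discordantPairs Γ Γ' = (discordantPairs Γs Γs').image (Prod.map Fin.castSucc Fin.castSucc) ∪
      (P \ P' ∪ P' \ P).image (fun i => (i.castSucc, Fin.last n)) := by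
  ext ⟨a, b⟩
  induction b using Fin.lastCases <;> induction a using Fin.lastCases <;>
    simp [discordantPairs, h.1, h.2, h'.1, h'.2, Fin.castSucc_ne_last,
      (Fin.castSucc_ne_last _).symm, (Fin.castSucc_lt_last _).not_gt, ← xor_iff_not_iff, xor_def]

theorem unCD_eq_of_isExtAlong (h : IsExtAlong Γs P Γ) (h' : IsExtAlong Γs' P' Γ') :
    unCD Γ Γ' = unCD Γs Γs' + #(P \ P') + #(P' \ P) := by
  have hdisj : Disjoint ((discordantPairs Γs Γs').image (Prod.map Fin.castSucc Fin.castSucc))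
      ((P \ P' ∪ P' \ P).image (fun i => (i.castSucc, Fin.last n))) := by
    refine disjoint_left.2 fun p hp hp' => ?_
    obtain ⟨⟨i, j⟩, -, rfl⟩ := mem_image.1 hp
    obtain ⟨k, -, hk⟩ := mem_image.1 hp'
    exact Fin.castSucc_ne_last j (congrArg Prod.snd hk).symm
  rw [unCD_eq_card_discordantPairs, unCD_eq_card_discordantPairs,
    discordantPairs_eq_of_isExtAlong h h', card_union_of_disjoint hdisj,
    card_image_of_injective _ ((Fin.castSucc_injective n).prodMap (Fin.castSucc_injective n)),
    card_image_of_injective _ fun i j hij => Fin.castSucc_injective n (congrArg Prod.fst hij),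
    card_union_of_disjoint disjoint_sdiff_sdiff, add_assoc]

end Extension

theorem stmt11 {n : ℕ} {Γs Γs' : Finpartition (univ : Finset (Fin n))} {Sm : Finset (Fin n)}
    {Γm Γ₀' : Finpartition (univ : Finset (Fin (n + 1)))}
    (hm : IsComplexExt Γs Sm Γm) (h₀' : IsSimpleExt Γs' Γ₀')
    (E' : Finset (Fin n) → Finpartition (univ : Finset (Fin (n + 1))))
    (hE' : ∀ S ∈ Γs'.parts, IsComplexExt Γs' S (E' S)) :
    unCD Γm Γ₀' + ∑ S ∈ Γs'.parts, unCD Γm (E' S)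
      = (Γs'.parts.card + 1) * unCD Γs Γs' + (Γs'.parts.card - 1) * Sm.card + n := by
  rw [unCD_eq_of_isExtAlong hm.isExtAlong h₀'.isExtAlong,
    sum_congr rfl fun S hS => unCD_eq_of_isExtAlong hm.isExtAlong (hE' S hS).isExtAlong,
    sum_add_distrib, sum_add_distrib, sum_const, smul_eq_mul,
    Γs'.sum_card_sdiff_parts (subset_univ Sm), Γs'.sum_card_parts_sdiff (subset_univ Sm),
    card_univ, Fintype.card_fin, sdiff_empty, empty_sdiff, card_empty, add_one_mul]
  have hSm : #Sm ≤ n := by simpa using Sm.card_le_univ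
  omega
end

section
/- For any partitions Γ*, Γ*' of {1,...,n} with n ≥ 1, the sum of unCD distances from the simple extension of Γ* to all extensions of Γ*' is less than or equal to the corresponding sum from any complex extension of Γ*. -/
open Finset

/-!
Split the pairs of `{1,…,n+1}` into those inside `{1,…,n}` and those containing `n+1`. On the
first kind every extension agrees with its reduct, so for an extension `Γ` of `Γ*` and `Γ'` of
`Γ*'` we get `unCD Γ Γ' = unCD Γ* Γ*' + #(A ∆ A')`, where `A`, `A'` are the sets of elements
sharing a block with `n+1`. For the simple extension `A = ∅`, for the complex one along `Sm`
we have `A = Sm`, and `A'` runs over `∅` and the blocks `S` of `Γ*'`. The claim becomes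
`∑ #S ≤ #Sm + ∑ #(Sm ∆ S)`, which holds because `S \ Sm ⊆ Sm ∆ S` and the blocks `S` meet
`Sm` in disjoint sets.
-/

open scoped symmDiff

namespace Finpartition

variable {α : Type*} [DecidableEq α] {s : Finset α}

theorem sum_card_inter (P : Finpartition s) (t : Finset α) :
    ∑ u ∈ P.parts, #(u ∩ t) = #(s ∩ t) := by
  rw [← card_biUnion (t := fun u => u ∩ t) fun u hu v hv huv =>
    (P.disjoint hu hv huv).mono inter_subset_left inter_subset_left, ← biUnion_inter]
  exact congrArg (fun v => #(v ∩ t)) P.biUnion_parts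

theorem sum_card_le_card_add_sum_card_symmDiff (P : Finpartition s) (t : Finset α) :
    ∑ u ∈ P.parts, #u ≤ #t + ∑ u ∈ P.parts, #(t ∆ u) := by
  calc ∑ u ∈ P.parts, #u = ∑ u ∈ P.parts, (#(u ∩ t) + #(u \ t)) := by
        simp only [card_inter_add_card_sdiff]
    _ = #(s ∩ t) + ∑ u ∈ P.parts, #(u \ t) := by rw [sum_add_distrib, P.sum_card_inter]
    _ ≤ #t + ∑ u ∈ P.parts, #(t ∆ u) := by
        gcongr with u
        · exact inter_subset_right
        · exact le_sup_right

end Finpartition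

theorem Fin.card_filter_lt_succ {n : ℕ} (p : Fin (n + 1) → Fin (n + 1) → Prop)
    [DecidableRel p] :
    #{q : Fin (n + 1) × Fin (n + 1) | q.1 < q.2 ∧ p q.1 q.2} =
      #{q : Fin n × Fin n | q.1 < q.2 ∧ p q.1.castSucc q.2.castSucc} +
        #{i : Fin n | p i.castSucc (Fin.last n)} := by
  simp only [card_filter, Fintype.sum_prod_type, Fin.sum_univ_castSucc,
    Fin.castSucc_lt_castSucc_iff, Fin.castSucc_lt_last, true_and, lt_irrefl, false_and, if_false,
    add_zero, sum_add_distrib]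
  simp [not_lt.2 (Fin.le_last _)]

section Extensions

variable {n : ℕ}

theorem samePart_castSucc_of_isSimpleExt {Γs : Finpartition (univ : Finset (Fin n))}
    {Γ : Finpartition (univ : Finset (Fin (n + 1)))} (h : IsSimpleExt Γs Γ) (i j : Fin n) :
    samePart Γ i.castSucc j.castSucc ↔ samePart Γs i j := by
  unfold samePart
  rw [show Γ.parts = _ from h]
  simp [Fin.castSucc_ne_last]

theorem samePart_castSucc_of_isComplexExt {Γs : Finpartition (univ : Finset (Fin n))}
    {S : Finset (Fin n)} {Γ : Finpartition (univ : Finset (Fin (n + 1)))}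
    (h : IsComplexExt Γs S Γ) (i j : Fin n) :
    samePart Γ i.castSucc j.castSucc ↔ samePart Γs i j := by
  unfold samePart
  rw [h.2]
  simp only [mem_insert, mem_image, mem_erase, ne_eq, exists_eq_or_imp, Fin.castSucc_ne_last,
    Fin.castSucc_inj, exists_eq_right, false_or, ↓existsAndEq, and_true]
  constructor
  · rintro (⟨hi, hj⟩ | ⟨T, ⟨-, hT⟩, hi, hj⟩)
    exacts [⟨S, h.1, hi, hj⟩, ⟨T, hT, hi, hj⟩]
  · rintro ⟨T, hT, hi, hj⟩
    by_cases hTS : T = S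
    · exact .inl (hTS ▸ ⟨hi, hj⟩)
    · exact .inr ⟨T, ⟨hTS, hT⟩, hi, hj⟩

theorem samePart_castSucc_of_isExt {Γs : Finpartition (univ : Finset (Fin n))}
    {Γ : Finpartition (univ : Finset (Fin (n + 1)))} (h : IsExt Γs Γ) (i j : Fin n) :
    samePart Γ i.castSucc j.castSucc ↔ samePart Γs i j :=
  h.elim (samePart_castSucc_of_isSimpleExt · i j)
    fun ⟨_, h⟩ => samePart_castSucc_of_isComplexExt h i j

open Classical in
noncomputable def partnersOfLast (Γ : Finpartition (univ : Finset (Fin (n + 1)))) :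
    Finset (Fin n) :=
  {i | samePart Γ i.castSucc (Fin.last n)}

theorem partnersOfLast_of_isSimpleExt {Γs : Finpartition (univ : Finset (Fin n))}
    {Γ : Finpartition (univ : Finset (Fin (n + 1)))} (h : IsSimpleExt Γs Γ) :
    partnersOfLast Γ = ∅ := by
  unfold partnersOfLast samePart
  rw [show Γ.parts = _ from h]
  simp [Fin.castSucc_ne_last]

theorem partnersOfLast_of_isComplexExt {Γs : Finpartition (univ : Finset (Fin n))}
    {S : Finset (Fin n)} {Γ : Finpartition (univ : Finset (Fin (n + 1)))}
    (h : IsComplexExt Γs S Γ) : partnersOfLast Γ = S := by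
  unfold partnersOfLast samePart
  rw [h.2]
  ext i
  simp [Fin.castSucc_ne_last]

theorem unCD_of_isExt {Γs₁ Γs₂ : Finpartition (univ : Finset (Fin n))}
    {Γ₁ Γ₂ : Finpartition (univ : Finset (Fin (n + 1)))}
    (h₁ : IsExt Γs₁ Γ₁) (h₂ : IsExt Γs₂ Γ₂) :
    unCD Γ₁ Γ₂ = unCD Γs₁ Γs₂ + #(partnersOfLast Γ₁ ∆ partnersOfLast Γ₂) := by
  classical
  unfold unCD
  rw [Fin.card_filter_lt_succ (fun a b => ¬(samePart Γ₁ a b ↔ samePart Γ₂ a b))]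
  simp only [samePart_castSucc_of_isExt h₁, samePart_castSucc_of_isExt h₂]
  congr 2
  ext i
  simp [partnersOfLast, mem_symmDiff]
  tauto

end Extensions

theorem stmt12_general {n : ℕ} {Γs Γs' : Finpartition (univ : Finset (Fin n))} {Sm : Finset (Fin n)}
    {Γ₀ Γm Γ₀' : Finpartition (univ : Finset (Fin (n + 1)))}
    (h₀ : IsSimpleExt Γs Γ₀) (hm : IsComplexExt Γs Sm Γm) (h₀' : IsSimpleExt Γs' Γ₀')
    (E' : Finset (Fin n) → Finpartition (univ : Finset (Fin (n + 1))))
    (hE' : ∀ S ∈ Γs'.parts, IsComplexExt Γs' S (E' S)) :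
    unCD Γ₀ Γ₀' + ∑ S ∈ Γs'.parts, unCD Γ₀ (E' S)
      ≤ unCD Γm Γ₀' + ∑ S ∈ Γs'.parts, unCD Γm (E' S) := by
  have dist_simple {Γ T} (h : IsExt Γs' Γ) (hT : partnersOfLast Γ = T) :
      unCD Γ₀ Γ = unCD Γs Γs' + #T := by
    rw [unCD_of_isExt (.inl h₀) h, partnersOfLast_of_isSimpleExt h₀, hT, ← bot_eq_empty,
      bot_symmDiff]
  have dist_complex {Γ T} (h : IsExt Γs' Γ) (hT : partnersOfLast Γ = T) :
      unCD Γm Γ = unCD Γs Γs' + #(Sm ∆ T) := by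
    rw [unCD_of_isExt (.inr ⟨Sm, hm⟩) h, partnersOfLast_of_isComplexExt hm, hT]
  have hΓ₀' := partnersOfLast_of_isSimpleExt h₀'
  have partners_E' (S) (hS : S ∈ Γs'.parts) := partnersOfLast_of_isComplexExt (hE' S hS)
  rw [dist_simple (.inl h₀') hΓ₀', dist_complex (.inl h₀') hΓ₀',
    sum_congr rfl fun S hS => dist_simple (.inr ⟨S, hE' S hS⟩) (partners_E' S hS),
    sum_congr rfl fun S hS => dist_complex (.inr ⟨S, hE' S hS⟩) (partners_E' S hS),
    sum_add_distrib, sum_add_distrib, ← bot_eq_empty, symmDiff_bot, bot_eq_empty, card_empty]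
  have := Γs'.sum_card_le_card_add_sum_card_symmDiff Sm
  omega

theorem stmt12 {n : ℕ} (hn : 1 ≤ n) {Γs Γs' : Finpartition (univ : Finset (Fin n))} {Sm : Finset (Fin n)}
    {Γ₀ Γm Γ₀' : Finpartition (univ : Finset (Fin (n + 1)))}
    (h₀ : IsSimpleExt Γs Γ₀) (hm : IsComplexExt Γs Sm Γm) (h₀' : IsSimpleExt Γs' Γ₀')
    (E' : Finset (Fin n) → Finpartition (univ : Finset (Fin (n + 1))))
    (hE' : ∀ S ∈ Γs'.parts, IsComplexExt Γs' S (E' S)) :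
    unCD Γ₀ Γ₀' + ∑ S ∈ Γs'.parts, unCD Γ₀ (E' S)
      ≤ unCD Γm Γ₀' + ∑ S ∈ Γs'.parts, unCD Γm (E' S) :=
  stmt12_general h₀ hm h₀' E' hE'
end

section
/- For every n ≥ 2, among all partitions of {1,...,n}, the total-separation partition (every element in its own singleton block) has the minimal sum of unCD distances to all other partitions of {1,...,n}. -/
open Finset

/-!
Swap the sums: `∑ Γ', unCD Γ Γ'` counts, for each pair `i < j`, the partitions `Γ'` that disagree
with `Γ` about whether `i` and `j` share a block. Splitting `j` off into a singleton is injective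
on the partitions joining `i` and `j` (the old block of `j` is that of `i`), so at most as many
partitions join `i` and `j` as separate them. The total separation is disagreed with exactly by
the joining ones, the smaller count; any other `Γ` by all joining or all separating ones.
-/

open scoped Classical

variable {n : ℕ}

lemma samePart_iff_part_eq (Γ : Finpartition (univ : Finset (Fin n))) (i j : Fin n) :
    samePart Γ i j ↔ Γ.part i = Γ.part j :=
  Γ.mem_part_iff_exists.symm.trans (Γ.mem_part_iff_part_eq_part (mem_univ _) (mem_univ _))

lemma samePart_bot_iff {i j : Fin n} :
    samePart (⊥ : Finpartition (univ : Finset (Fin n))) i j ↔ i = j := by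
  simp [samePart, eq_comm]

lemma samePart_ofSetoid (s : Setoid (Fin n)) [DecidableRel s.r] (i j : Fin n) :
    samePart (Finpartition.ofSetoid s) i j ↔ s i j := by
  rw [samePart, ← Finpartition.mem_part_iff_exists, Finpartition.mem_part_ofSetoid_iff_rel]
  exact ⟨s.symm, s.symm⟩

lemma Finpartition.eq_of_samePart_iff {Γ Γ' : Finpartition (univ : Finset (Fin n))}
    (h : ∀ i j, samePart Γ i j ↔ samePart Γ' i j) : Γ = Γ' := by
  have hpart : Γ.part = Γ'.part := by
    funext a; ext x
    simp only [Finpartition.mem_part_iff_exists]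
    exact h x a
  ext S
  constructor <;> intro hS
  · obtain ⟨a, -, rfl⟩ := Γ.part_surjOn hS
    exact hpart ▸ Γ'.part_mem.2 (mem_univ a)
  · obtain ⟨a, -, rfl⟩ := Γ'.part_surjOn hS
    exact hpart ▸ Γ.part_mem.2 (mem_univ a)

/-- The partition obtained from `Γ` by moving `j` into a singleton block. -/
noncomputable def separate (Γ : Finpartition (univ : Finset (Fin n))) (j : Fin n) :
    Finpartition (univ : Finset (Fin n)) :=
  .ofSetoid (Setoid.ker fun x => if x = j then none else some (Γ.part x))

lemma not_samePart_separate (Γ : Finpartition (univ : Finset (Fin n))) {i j : Fin n}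
    (hij : i ≠ j) : ¬ samePart (separate Γ j) i j := by
  rw [separate, samePart_ofSetoid]
  simp [hij]

lemma samePart_iff_samePart_separate {Γ : Finpartition (univ : Finset (Fin n))} {i j : Fin n}
    (hij : i ≠ j) (hΓ : samePart Γ i j) (x y : Fin n) :
    samePart Γ x y ↔
      samePart (separate Γ j) (if x = j then i else x) (if y = j then i else y) := by
  rw [samePart_iff_part_eq] at hΓ
  rw [separate, samePart_ofSetoid, Setoid.ker_def, samePart_iff_part_eq]
  by_cases hx : x = j <;> by_cases hy : y = j <;> simp [hx, hy, hij, hΓ]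

lemma card_samePart_le_card_not_samePart {i j : Fin n} (hij : i ≠ j) :
    #{Γ : Finpartition (univ : Finset (Fin n)) | samePart Γ i j} ≤
      #{Γ : Finpartition (univ : Finset (Fin n)) | ¬ samePart Γ i j} := by
  refine card_le_card_of_injOn (separate · j) (fun Γ _ => ?_) (fun Γ₁ h₁ Γ₂ h₂ heq => ?_)
  · simpa using not_samePart_separate Γ hij
  · simp only [coe_filter, mem_univ, true_and, Set.mem_ofPred_eq] at h₁ h₂
    refine Finpartition.eq_of_samePart_iff fun x y => ?_
    rw [samePart_iff_samePart_separate hij h₁, samePart_iff_samePart_separate hij h₂]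
    dsimp only at heq
    rw [heq]

lemma card_samePart_le_card_disagree {i j : Fin n} (hij : i ≠ j) (P : Prop) :
    #{Γ : Finpartition (univ : Finset (Fin n)) | samePart Γ i j} ≤
      #{Γ : Finpartition (univ : Finset (Fin n)) | ¬ (P ↔ samePart Γ i j)} := by
  by_cases hP : P
  · simpa [hP] using card_samePart_le_card_not_samePart hij
  · simp [hP]

lemma unCD_self (Γ : Finpartition (univ : Finset (Fin n))) : unCD Γ Γ = 0 := by
  simp [unCD]

lemma sum_unCD_eq_sum_pairs (Γ : Finpartition (univ : Finset (Fin n))) :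
    ∑ Γ', unCD Γ Γ' = ∑ p : Fin n × Fin n with p.1 < p.2,
      #{Γ' : Finpartition (univ : Finset (Fin n)) | ¬ (samePart Γ p.1 p.2 ↔ samePart Γ' p.1 p.2)} := by
  simp only [unCD, card_filter, sum_filter, ite_and]
  rw [sum_comm]
  exact sum_congr rfl fun p _ => by split_ifs <;> simp

theorem stmt14_general {n : ℕ} (Γ : Finpartition (univ : Finset (Fin n))) :
    ∑ Γ' ∈ univ.erase (⊥ : Finpartition (univ : Finset (Fin n))), unCD (⊥ : Finpartition (univ : Finset (Fin n))) Γ'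
      ≤ ∑ Γ' ∈ univ.erase Γ, unCD Γ Γ' := by
  rw [sum_erase univ (unCD_self ⊥), sum_erase univ (unCD_self Γ),
    sum_unCD_eq_sum_pairs, sum_unCD_eq_sum_pairs]
  refine sum_le_sum fun p hp => ?_
  have hne := (mem_filter.1 hp).2.ne
  simpa only [samePart_bot_iff, hne, false_iff, not_not] using card_samePart_le_card_disagree hne _

theorem stmt14 {n : ℕ} (hn : 2 ≤ n) (Γ : Finpartition (univ : Finset (Fin n))) :
    ∑ Γ' ∈ univ.erase (⊥ : Finpartition (univ : Finset (Fin n))), unCD (⊥ : Finpartition (univ : Finset (Fin n))) Γ'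
      ≤ ∑ Γ' ∈ univ.erase Γ, unCD Γ Γ' :=
  stmt14_general Γ
end

section
/- For every n ≥ 2 and every k_max > 1, the sum of unCD distances from the total-separation partition of {1,...,n} to all partitions of {1,...,n} with at most k_max blocks is less than or equal to the corresponding sum from any other partition of {1,...,n}. -/
open Finset

open scoped Classical

lemma samePart_iff {n : ℕ} (Γ : Finpartition (univ : Finset (Fin n))) (i j : Fin n) :
    samePart Γ i j ↔ j ∈ Γ.part i := by
  constructor
  · rintro ⟨S, hS, hi, hj⟩
    rwa [Γ.part_eq_of_mem hS hi]
  · intro h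
    exact ⟨Γ.part i, Γ.part_mem.2 (mem_univ i), Γ.mem_part (mem_univ i), h⟩

lemma samePart_iff' {n : ℕ} (Γ : Finpartition (univ : Finset (Fin n))) (i j : Fin n) :
    samePart Γ i j ↔ Γ.part i = Γ.part j := by
  constructor
  · rintro ⟨S, hS, hi, hj⟩
    rw [Γ.part_eq_of_mem hS hi, Γ.part_eq_of_mem hS hj]
  · intro h
    refine ⟨Γ.part i, Γ.part_mem.2 (mem_univ i), Γ.mem_part (mem_univ i), ?_⟩
    rw [h]; exact Γ.mem_part (mem_univ j)

lemma samePart_bot {n : ℕ} (i j : Fin n) : samePart (⊥ : Finpartition (univ : Finset (Fin n))) i j ↔ i = j := by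
  simp only [samePart, Finpartition.parts_bot, mem_map, Function.Embedding.coeFn_mk]
  constructor
  · rintro ⟨S, ⟨a, -, rfl⟩, hi, hj⟩
    simp only [mem_singleton] at hi hj
    rw [hi, hj]
  · rintro rfl
    exact ⟨{i}, ⟨i, mem_univ i, rfl⟩, mem_singleton_self i, mem_singleton_self i⟩

lemma ofSetoid_parts {n : ℕ} (s : Setoid (Fin n)) [DecidableRel s.r] :
    (Finpartition.ofSetoid s).parts = univ.image (fun a => univ.filter (s.r a)) := by
  rfl

lemma eq_of_samePart {n : ℕ} {Γ₁ Γ₂ : Finpartition (univ : Finset (Fin n))}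
    (h : ∀ a b, samePart Γ₁ a b ↔ samePart Γ₂ a b) : Γ₁ = Γ₂ := by
  have hp : ∀ a, Γ₁.part a = Γ₂.part a := by
    intro a
    have e1 : Γ₁.part a = univ.filter (fun b => samePart Γ₁ a b) := by
      ext b; simp [samePart_iff]
    have e2 : Γ₂.part a = univ.filter (fun b => samePart Γ₂ a b) := by
      ext b; simp [samePart_iff]
    rw [e1, e2]
    exact filter_congr (fun b _ => h a b)
  apply Finpartition.ext
  ext T
  constructor <;> intro hT
  · obtain ⟨a, haT⟩ := Finpartition.nonempty_of_mem_parts _ hT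
    rw [← Γ₁.part_eq_of_mem hT haT, hp]
    exact Γ₂.part_mem.2 (mem_univ a)
  · obtain ⟨a, haT⟩ := Finpartition.nonempty_of_mem_parts _ hT
    rw [← Γ₂.part_eq_of_mem hT haT, ← hp]
    exact Γ₁.part_mem.2 (mem_univ a)

/-- Labeling function: in the "move" case `j` gets the label of an element outside its block,
in the "split" case (block of `j` is everything) `j` gets the label `none`. -/
noncomputable def repl {n : ℕ} (Γ' : Finpartition (univ : Finset (Fin n))) (j : Fin n) :
    Fin n → Option (Finset (Fin n)) :=
  if h : ∃ m, m ∉ Γ'.part j then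
    fun x => some (Γ'.part (if x = j then h.choose else x))
  else fun x => if x = j then none else some (Γ'.part x)

noncomputable def move {n : ℕ} (Γ' : Finpartition (univ : Finset (Fin n))) (j : Fin n) :
    Finpartition (univ : Finset (Fin n)) :=
  Finpartition.ofSetoid (Setoid.ker (repl Γ' j))

lemma samePart_move {n : ℕ} (Γ' : Finpartition (univ : Finset (Fin n))) (j a b : Fin n) :
    samePart (move Γ' j) a b ↔ repl Γ' j a = repl Γ' j b := by
  rw [samePart_iff, move, Finpartition.mem_part_ofSetoid_iff_rel]
  rfl

lemma repl_ne {n : ℕ} (Γ' : Finpartition (univ : Finset (Fin n))) {j x : Fin n} (hx : x ≠ j) :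
    repl Γ' j x = some (Γ'.part x) := by
  unfold repl
  split <;> simp [hx]

lemma not_samePart_move {n : ℕ} {Γ' : Finpartition (univ : Finset (Fin n))} {i j : Fin n}
    (hij : i ≠ j) (hs : samePart Γ' i j) : ¬ samePart (move Γ' j) i j := by
  rw [samePart_move, repl_ne Γ' hij]
  unfold repl
  split
  · rename_i h
    intro he
    simp only at he
    rw [if_true, Option.some_inj] at he
    have hm : h.choose ∈ Γ'.part h.choose := Γ'.mem_part (mem_univ _)
    rw [← he] at hm
    rw [samePart_iff'] at hs
    rw [hs] at hm
    exact h.choose_spec hm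
  · simp

lemma card_parts_ker {n : ℕ} {β : Type} [DecidableEq β] (g : Fin n → β) :
    (Finpartition.ofSetoid (Setoid.ker g)).parts.card ≤ (univ.image g).card := by
  rw [ofSetoid_parts]
  have he : univ.image (fun a => univ.filter ((Setoid.ker g).r a))
      = (univ.image g).image (fun c => univ.filter (fun b => c = g b)) := by
    rw [image_image]
    exact image_congr fun a _ => filter_congr fun b _ => Iff.rfl
  rw [he]
  exact card_image_le

lemma card_move_le {n : ℕ} {Γ' : Finpartition (univ : Finset (Fin n))} {j : Fin n} {kmax : ℕ}
    (hk : 1 < kmax) (hc : Γ'.parts.card ≤ kmax) : (move Γ' j).parts.card ≤ kmax := by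
  refine le_trans (b := (univ.image (repl Γ' j)).card) (show (move Γ' j).parts.card ≤ (univ.image (repl Γ' j)).card by unfold move; convert card_parts_ker (repl Γ' j)) ?_
  unfold repl
  split
  · -- move case
    rename_i h
    have e : univ.image (fun x => some (Γ'.part (if x = j then h.choose else x)))
        = (univ.image (fun x => Γ'.part (if x = j then h.choose else x))).image some := by
      rw [image_image]; rfl
    rw [e, card_image_of_injective _ (Option.some_injective _)]
    refine le_trans (card_le_card ?_) hc
    intro T hT
    simp only [mem_image] at hT
    obtain ⟨x, -, rfl⟩ := hT
    exact Γ'.part_mem.2 (mem_univ _)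
  · -- split case: block of j is everything
    rename_i h
    push_neg at h
    have hu : Γ'.part j = univ := eq_univ_of_forall h
    have hall : ∀ x : Fin n, Γ'.part x = univ := by
      intro x
      have : x ∈ Γ'.part j := by rw [hu]; exact mem_univ x
      rw [Γ'.mem_part_iff_part_eq_part (mem_univ x) (mem_univ j)] at this
      rw [this, hu]
    have hsub : univ.image (fun x => if x = j then none else some (Γ'.part x))
        ⊆ insert none ({some univ} : Finset (Option (Finset (Fin n)))) := by
      intro o ho
      simp only [mem_image] at ho
      obtain ⟨x, -, rfl⟩ := ho
      by_cases hx : x = j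
      · rw [if_pos hx]; exact mem_insert_self _ _
      · rw [if_neg hx, hall x]; exact mem_insert_of_mem (mem_singleton_self _)
    refine le_trans (card_le_card hsub) (le_trans ?_ hk)
    exact le_trans (card_insert_le _ _) (by simp)

lemma samePart_move_eq {n : ℕ} {Γ' : Finpartition (univ : Finset (Fin n))} {i j : Fin n}
    (hij : i ≠ j) (hs : samePart Γ' i j) (a b : Fin n) :
    samePart Γ' a b ↔
      samePart (move Γ' j) (if a = j then i else a) (if b = j then i else b) := by
  have hpij : Γ'.part i = Γ'.part j := (samePart_iff' Γ' i j).1 hs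
  have key : ∀ x : Fin n, repl Γ' j (if x = j then i else x) = some (Γ'.part x) := by
    intro x
    by_cases hx : x = j
    · rw [if_pos hx, repl_ne Γ' hij, hx, hpij]
    · rw [if_neg hx, repl_ne Γ' hx]
  rw [samePart_move, key a, key b, Option.some_inj, ← samePart_iff']

lemma move_injOn {n : ℕ} {Γ₁ Γ₂ : Finpartition (univ : Finset (Fin n))} {i j : Fin n}
    (hij : i ≠ j) (h1 : samePart Γ₁ i j) (h2 : samePart Γ₂ i j)
    (hm : move Γ₁ j = move Γ₂ j) : Γ₁ = Γ₂ := by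
  apply eq_of_samePart
  intro a b
  rw [samePart_move_eq hij h1 a b, hm, ← samePart_move_eq hij h2 a b]

lemma count_le {n : ℕ} {kmax : ℕ} (hk : 1 < kmax) {i j : Fin n} (hij : i ≠ j) :
    ((univ.filter (fun Γ' : Finpartition (univ : Finset (Fin n)) => Γ'.parts.card ≤ kmax)).filter
        (fun Γ' => samePart Γ' i j)).card ≤
      ((univ.filter (fun Γ' : Finpartition (univ : Finset (Fin n)) => Γ'.parts.card ≤ kmax)).filter
        (fun Γ' => ¬ samePart Γ' i j)).card := by
  apply Finset.card_le_card_of_injOn (fun Γ' => move Γ' j)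
  · intro Γ' hΓ'
    simp only [coe_filter, mem_filter, mem_univ, true_and, Set.mem_setOf_eq] at hΓ' ⊢
    exact ⟨card_move_le hk hΓ'.1, not_samePart_move hij hΓ'.2⟩
  · intro Γ₁ h₁ Γ₂ h₂ h
    simp only [coe_filter, Set.mem_setOf_eq] at h₁ h₂
    exact move_injOn hij h₁.2 h₂.2 h

theorem stmt15 {n : ℕ} (hn : 2 ≤ n) {kmax : ℕ} (hk : 1 < kmax)
    (Γ : Finpartition (univ : Finset (Fin n))) :
    ∑ Γ' ∈ univ.filter (fun Γ' : Finpartition (univ : Finset (Fin n)) => Γ'.parts.card ≤ kmax), unCD (⊥ : Finpartition (univ : Finset (Fin n))) Γ'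
      ≤ ∑ Γ' ∈ univ.filter (fun Γ' : Finpartition (univ : Finset (Fin n)) => Γ'.parts.card ≤ kmax), unCD Γ Γ' := by
  classical
  set F := univ.filter (fun Γ' : Finpartition (univ : Finset (Fin n)) => Γ'.parts.card ≤ kmax) with hF
  have expand : ∀ Δ : Finpartition (univ : Finset (Fin n)),
      ∑ Γ' ∈ F, unCD Δ Γ' =
        ∑ p ∈ (univ : Finset (Fin n × Fin n)),
          (F.filter (fun Γ' => p.1 < p.2 ∧ ¬ (samePart Δ p.1 p.2 ↔ samePart Γ' p.1 p.2))).card := by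
    intro Δ
    simp_rw [unCD, Finset.card_filter]
    rw [Finset.sum_comm]
  rw [expand ⊥, expand Γ]
  apply Finset.sum_le_sum
  intro p _
  by_cases hlt : p.1 < p.2
  · have hij : p.1 ≠ p.2 := ne_of_lt hlt
    have hbot : ¬ samePart (⊥ : Finpartition (univ : Finset (Fin n))) p.1 p.2 := fun hc =>
      hij ((samePart_bot _ _).1 hc)
    have eL : F.filter (fun Γ' => p.1 < p.2 ∧ ¬ (samePart ⊥ p.1 p.2 ↔ samePart Γ' p.1 p.2))
        = F.filter (fun Γ' => samePart Γ' p.1 p.2) := by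
      apply filter_congr
      intro Γ' _
      constructor
      · rintro ⟨-, hne⟩
        by_contra hns
        exact hne ⟨fun h => absurd h hbot, fun h => absurd h hns⟩
      · intro hs
        exact ⟨hlt, fun hiff => hbot (hiff.2 hs)⟩
    rw [eL]
    by_cases hΓ : samePart Γ p.1 p.2
    · have eR : F.filter (fun Γ' => p.1 < p.2 ∧ ¬ (samePart Γ p.1 p.2 ↔ samePart Γ' p.1 p.2))
          = F.filter (fun Γ' => ¬ samePart Γ' p.1 p.2) := by
        apply filter_congr
        intro Γ' _
        constructor
        · rintro ⟨-, hne⟩ hs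
          exact hne ⟨fun _ => hs, fun _ => hΓ⟩
        · intro hns
          exact ⟨hlt, fun hiff => hns (hiff.1 hΓ)⟩
      rw [eR]
      exact count_le hk hij
    · have eR : F.filter (fun Γ' => p.1 < p.2 ∧ ¬ (samePart Γ p.1 p.2 ↔ samePart Γ' p.1 p.2))
          = F.filter (fun Γ' => samePart Γ' p.1 p.2) := by
        apply filter_congr
        intro Γ' _
        constructor
        · rintro ⟨-, hne⟩
          by_contra hns
          exact hne ⟨fun h => absurd h hΓ, fun h => absurd h hns⟩
        · intro hs
          exact ⟨hlt, fun hiff => hΓ (hiff.2 hs)⟩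
      rw [eR]
  · have hemp : ∀ Δ : Finpartition (univ : Finset (Fin n)),
        F.filter (fun Γ' => p.1 < p.2 ∧ ¬ (samePart Δ p.1 p.2 ↔ samePart Γ' p.1 p.2)) = ∅ := by
      intro Δ
      apply filter_false_of_mem
      intro Γ' _ h
      exact hlt h.1
    rw [hemp ⊥, hemp Γ]
end
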